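/- Let 0 ≤ w < 1 and let (Σ₊, Σ_A, Σ_B, Σ_C, v₁, v₂, Ω₁, Ω₂) be a solution of the Bianchi type I two-fluid system on ℝ with vᵢ(τ)² < 1 for all τ, and suppose all the component functions are continuous with q bounded on compact intervals. If the Codazzi constraint Q₁(τ₀) + Q₂(τ₀) = 0 holds at some time τ₀, then Q₁(τ) + Q₂(τ) = 0 for all τ; i.e. the Codazzi constraint is preserved by the evolution. -/

import Mathlib

open Filter Topology

noncomputable def Qflux (w Ω v : ℝ) : ℝ := (1 + w) * Ω * v / (1 + w * v ^ 2)

noncomputable def Pres (w Ω v : ℝ) : ℝ :=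
  w * Ω + (1 / 3) * (1 - 3 * w) * Qflux w Ω v * v

noncomputable def Sig2 (Sp SA SB SC : ℝ) : ℝ := Sp ^ 2 + SA ^ 2 + SB ^ 2 + SC ^ 2

noncomputable def decel (w Sp SA SB SC v1 v2 O1 O2 : ℝ) : ℝ :=
  2 * Sig2 Sp SA SB SC + (1 / 2) * ((O1 + O2) + 3 * (Pres w O1 v1 + Pres w O2 v2))

/-- A solution of the Bianchi type I two-fluid system with equation of state
parameter `w`: eight differentiable functions satisfying the evolution
equations, where `q` is the deceleration parameter. -/
structure BianchiSol (w : ℝ) where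
  Sp : ℝ → ℝ
  SA : ℝ → ℝ
  SB : ℝ → ℝ
  SC : ℝ → ℝ
  v1 : ℝ → ℝ
  v2 : ℝ → ℝ
  O1 : ℝ → ℝ
  O2 : ℝ → ℝ
  q : ℝ → ℝ
  hq : ∀ τ : ℝ, q τ = decel w (Sp τ) (SA τ) (SB τ) (SC τ) (v1 τ) (v2 τ) (O1 τ) (O2 τ)
  hSp : ∀ τ : ℝ, HasDerivAt Sp (-(2 - q τ) * Sp τ + 3 * SA τ ^ 2
      - Qflux w (O1 τ) (v1 τ) * v1 τ - Qflux w (O2 τ) (v2 τ) * v2 τ) τ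
  hSA : ∀ τ : ℝ, HasDerivAt SA (-(2 - q τ + 3 * Sp τ + Real.sqrt 3 * SB τ) * SA τ) τ
  hSB : ∀ τ : ℝ, HasDerivAt SB (-(2 - q τ) * SB τ + Real.sqrt 3 * SA τ ^ 2
      - 2 * Real.sqrt 3 * SC τ ^ 2) τ
  hSC : ∀ τ : ℝ, HasDerivAt SC (-(2 - q τ - 2 * Real.sqrt 3 * SB τ) * SC τ) τ
  hv1 : ∀ τ : ℝ, HasDerivAt v1
      ((1 - w * v1 τ ^ 2)⁻¹ * (1 - v1 τ ^ 2) * (3 * w - 1 + 2 * Sp τ) * v1 τ) τ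
  hv2 : ∀ τ : ℝ, HasDerivAt v2
      ((1 - w * v2 τ ^ 2)⁻¹ * (1 - v2 τ ^ 2) * (3 * w - 1 + 2 * Sp τ) * v2 τ) τ
  hO1 : ∀ τ : ℝ, HasDerivAt O1 ((2 * q τ - 1 - 3 * w) * O1 τ
      + (3 * w - 1 + 2 * Sp τ) * Qflux w (O1 τ) (v1 τ) * v1 τ) τ
  hO2 : ∀ τ : ℝ, HasDerivAt O2 ((2 * q τ - 1 - 3 * w) * O2 τ
      + (3 * w - 1 + 2 * Sp τ) * Qflux w (O2 τ) (v2 τ) * v2 τ) τ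

lemma Qflux_deriv {w : ℝ} (hw0 : 0 ≤ w) (hw1 : w < 1) {O v : ℝ → ℝ} {q Sp τ : ℝ}
    (hv : v τ ^ 2 < 1)
    (hO : HasDerivAt O ((2 * q - 1 - 3 * w) * O τ
      + (3 * w - 1 + 2 * Sp) * Qflux w (O τ) (v τ) * v τ) τ)
    (hv' : HasDerivAt v
      ((1 - w * v τ ^ 2)⁻¹ * (1 - v τ ^ 2) * (3 * w - 1 + 2 * Sp) * v τ) τ) :
    HasDerivAt (fun t => Qflux w (O t) (v t))
      ((2 * q - 2 + 2 * Sp) * Qflux w (O τ) (v τ)) τ := by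
  have hv2 : 0 ≤ v τ ^ 2 := sq_nonneg _
  have hDpos : (0:ℝ) < 1 + w * v τ ^ 2 := by nlinarith
  have hD : (1 + w * v τ ^ 2) ≠ 0 := ne_of_gt hDpos
  have hD2 : (1 - w * v τ ^ 2) ≠ 0 := by nlinarith
  have hN : HasDerivAt (fun t => (1 + w) * O t * v t)
      (((1 + w) * ((2 * q - 1 - 3 * w) * O τ
        + (3 * w - 1 + 2 * Sp) * Qflux w (O τ) (v τ) * v τ)) * v τ
       + ((1 + w) * O τ)
        * ((1 - w * v τ ^ 2)⁻¹ * (1 - v τ ^ 2) * (3 * w - 1 + 2 * Sp) * v τ)) τ := by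
    simpa [mul_assoc] using (hO.const_mul (1 + w)).fun_mul hv'
  have hDen : HasDerivAt (fun t => 1 + w * v t ^ 2)
      (w * ((2:ℕ) * v τ ^ 1
        * ((1 - w * v τ ^ 2)⁻¹ * (1 - v τ ^ 2) * (3 * w - 1 + 2 * Sp) * v τ))) τ := by
    exact ((hv'.pow 2).const_mul w).const_add 1
  have : HasDerivAt (fun t => Qflux w (O t) (v t)) _ τ := hN.fun_div hDen hD
  convert this using 1
  simp only [Qflux]
  field_simp
  ring

/-- The Codazzi constraint is preserved by the evolution: if it holds at one
time, it holds for all times. -/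
theorem stmt_6 {w : ℝ} (hw0 : 0 ≤ w) (hw1 : w < 1) (S : BianchiSol w)
    (hv1 : ∀ τ : ℝ, S.v1 τ ^ 2 < 1) (hv2 : ∀ τ : ℝ, S.v2 τ ^ 2 < 1)
    (hcSp : Continuous S.Sp) (hcSA : Continuous S.SA)
    (hcSB : Continuous S.SB) (hcSC : Continuous S.SC)
    (hcv1 : Continuous S.v1) (hcv2 : Continuous S.v2)
    (hcO1 : Continuous S.O1) (hcO2 : Continuous S.O2)
    (hqbd : ∀ a b : ℝ, ∃ M : ℝ, ∀ τ ∈ Set.Icc a b, |S.q τ| ≤ M)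
    (τ₀ : ℝ) (h0 : Qflux w (S.O1 τ₀) (S.v1 τ₀) + Qflux w (S.O2 τ₀) (S.v2 τ₀) = 0) :
    ∀ τ : ℝ, Qflux w (S.O1 τ) (S.v1 τ) + Qflux w (S.O2 τ) (S.v2 τ) = 0 := by

  intro τ
  -- the combined flux
  set C : ℝ → ℝ := fun t => Qflux w (S.O1 t) (S.v1 t) + Qflux w (S.O2 t) (S.v2 t) with hC
  have hCd : ∀ t : ℝ, HasDerivAt C ((2 * S.q t - 2 + 2 * S.Sp t) * C t) t := by
    intro t
    have h1 := Qflux_deriv hw0 hw1 (hv1 t) (S.hO1 t) (S.hv1 t)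
    have h2 := Qflux_deriv hw0 hw1 (hv2 t) (S.hO2 t) (S.hv2 t)
    simpa [hC, mul_add] using h1.fun_add h2
  -- continuity of C
  have hCc : Continuous C := by
    have hden : ∀ (v : ℝ → ℝ), Continuous v → ∀ t : ℝ, (1 + w * v t ^ 2) ≠ 0 := by
      intro v hv t
      have : (0:ℝ) ≤ w * v t ^ 2 := mul_nonneg hw0 (sq_nonneg _)
      positivity
    have c1 : Continuous fun t => Qflux w (S.O1 t) (S.v1 t) := by
      simp only [Qflux]
      exact (((continuous_const.mul hcO1).mul hcv1).div
        (continuous_const.add (continuous_const.mul (hcv1.pow 2)))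
        (hden _ hcv1))
    have c2 : Continuous fun t => Qflux w (S.O2 t) (S.v2 t) := by
      simp only [Qflux]
      exact (((continuous_const.mul hcO2).mul hcv2).div
        (continuous_const.add (continuous_const.mul (hcv2.pow 2)))
        (hden _ hcv2))
    exact c1.add c2
  -- set up the interval
  set a : ℝ := min τ₀ τ - 1 with ha
  set b : ℝ := max τ₀ τ + 1 with hb
  have haτ₀ : a < τ₀ := by simp [ha]; linarith [min_le_left τ₀ τ]
  have hbτ₀ : τ₀ < b := by simp [hb]; linarith [le_max_left τ₀ τ]
  have haτ : a < τ := by simp [ha]; linarith [min_le_right τ₀ τ]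
  have hbτ : τ < b := by simp [hb]; linarith [le_max_right τ₀ τ]
  obtain ⟨M, hM⟩ := hqbd a b
  have hM0 : 0 ≤ M := le_trans (abs_nonneg _) (hM τ₀ ⟨haτ₀.le, hbτ₀.le⟩)
  obtain ⟨Ms, hMs⟩ : ∃ Ms : ℝ, ∀ t ∈ Set.Icc a b, |S.Sp t| ≤ Ms := by
    obtain ⟨Ms, hMs⟩ := (isCompact_Icc (a := a) (b := b)).exists_bound_of_continuousOn
      hcSp.continuousOn
    exact ⟨Ms, fun t ht => by simpa using hMs t ht⟩
  have hMs0 : 0 ≤ Ms := le_trans (abs_nonneg _) (hMs τ₀ ⟨haτ₀.le, hbτ₀.le⟩)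
  set L : ℝ := 2 * M + 2 + 2 * Ms with hL
  have hL0 : 0 ≤ L := by simp [hL]; linarith
  have hAbd : ∀ t ∈ Set.Icc a b, |2 * S.q t - 2 + 2 * S.Sp t| ≤ L := by
    intro t ht
    have h1 := hM t ht
    have h2 := hMs t ht
    have := abs_le.mp h1
    have := abs_le.mp h2
    rw [abs_le]
    constructor <;> [skip; skip] <;> simp [hL] <;> nlinarith [abs_le.mp h1, abs_le.mp h2]
  -- clamped vector field
  set F : ℝ → ℝ → ℝ := fun t x => (max (-L) (min (2 * S.q t - 2 + 2 * S.Sp t) L)) * x with hF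
  have hFlip : ∀ t : ℝ, LipschitzOnWith (Real.toNNReal L) (F t) Set.univ := by
    intro t
    apply LipschitzOnWith.of_dist_le_mul
    intro x _ y _
    have hcb : |max (-L) (min (2 * S.q t - 2 + 2 * S.Sp t) L)| ≤ L := by
      rw [abs_le]
      constructor
      · exact le_max_left _ _
      · exact max_le (by linarith) (min_le_right _ _)
    simp only [hF, Real.dist_eq, ← mul_sub, abs_mul]
    calc |max (-L) (min (2 * S.q t - 2 + 2 * S.Sp t) L)| * |x - y|
        ≤ L * |x - y| := mul_le_mul_of_nonneg_right hcb (abs_nonneg _)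
      _ = Real.toNNReal L * |x - y| := by rw [Real.coe_toNNReal _ hL0]
  have key : Set.EqOn C (fun _ => (0:ℝ)) (Set.Icc a b) := by
    apply ODE_solution_unique_of_mem_Icc (fun t _ => hFlip t) (t₀ := τ₀) ⟨haτ₀, hbτ₀⟩
      hCc.continuousOn
    · intro t ht
      have heq : F t (C t) = (2 * S.q t - 2 + 2 * S.Sp t) * C t := by
        have := hAbd t (Set.Ioo_subset_Icc_self ht)
        have h' := abs_le.mp this
        simp only [hF]
        rw [min_eq_left h'.2, max_eq_right h'.1]
      rw [heq]
      exact hCd t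
    · intro t _; trivial
    · exact continuousOn_const
    · intro t _
      have : F t 0 = 0 := by simp [hF]
      rw [this]
      exact hasDerivAt_const t 0
    · intro t _; trivial
    · simpa [hC] using h0
  have := key ⟨haτ.le, hbτ.le⟩
  simpa [hC] using this
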